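/- arXiv:2405.02122 — 6 statements merged into one kernel-verified Lean document; each statement's English description precedes it below -/
import Mathlib

section
/- For positive integers M₁, M₂ with M = gcd(M₁, M₂), write M₁ = s₁M and M₂ = s₂M. If s₁ is even and s₂ is odd, then the intersection of the set {2M₂x : x ∈ ℤ} and the set {M₁(1+2y) : y ∈ ℤ} equals the set {(M₁M₂/M)(1+2ℓ) : ℓ ∈ ℤ}. -/
theorem stmt_0 (M₁ M₂ : ℕ) (h₁ : 0 < M₁) (h₂ : 0 < M₂)
    (M s₁ s₂ : ℕ) (hM : M = Nat.gcd M₁ M₂) (hs₁ : M₁ = s₁ * M) (hs₂ : M₂ = s₂ * M)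
    (he : Even s₁) (ho : Odd s₂) :
    {z : ℤ | ∃ x : ℤ, z = 2 * M₂ * x} ∩ {z : ℤ | ∃ y : ℤ, z = M₁ * (1 + 2 * y)} =
      {z : ℤ | ∃ ℓ : ℤ, z = ((M₁ * M₂ / M : ℕ) : ℤ) * (1 + 2 * ℓ)} := by
  have hMpos : 0 < M := by
    rcases Nat.eq_zero_or_pos M with h | h
    · subst h; simp at hs₁; omega
    · exact h
  have hdiv : (M₁ * M₂ / M : ℕ) = s₁ * M₂ := by
    rw [hs₁, mul_comm s₁ M, mul_assoc, Nat.mul_div_cancel_left _ hMpos]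
  have hcop : Nat.Coprime s₁ s₂ := by
    have h1 : s₁ = M₁ / M := by rw [hs₁]; exact (Nat.mul_div_cancel _ hMpos).symm
    have h2 : s₂ = M₂ / M := by rw [hs₂]; exact (Nat.mul_div_cancel _ hMpos).symm
    rw [h1, h2, hM]
    exact Nat.coprime_div_gcd_div_gcd (Nat.gcd_pos_of_pos_left _ h₁)
  have hcopZ : IsCoprime (s₂ : ℤ) (s₁ : ℤ) := by
    rw [Int.isCoprime_iff_gcd_eq_one, Int.gcd_natCast_natCast]
    exact hcop.symm
  obtain ⟨t, ht⟩ := he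
  obtain ⟨u, hu⟩ := ho
  ext z
  simp only [Set.mem_inter_iff, Set.mem_setOf_eq, hdiv]
  push_cast [hs₁, hs₂, ht, hu]
  constructor
  · rintro ⟨⟨x, hx⟩, ⟨y, hy⟩⟩
    have hM0 : (M : ℤ) ≠ 0 := by exact_mod_cast hMpos.ne'
    push_cast [ht, hu] at hcopZ
    have key : 2 * (2 * (u : ℤ) + 1) * x = ((t : ℤ) + t) * (1 + 2 * y) := by
      have h : (2 * (2 * (u : ℤ) + 1) * x) * M = (((t : ℤ) + t) * (1 + 2 * y)) * M := by
        linear_combination hy - hx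
      exact mul_right_cancel₀ hM0 h
    have hdvd : (2 * (u : ℤ) + 1) ∣ ((t : ℤ) + t) * (1 + 2 * y) :=
      ⟨2 * x, by linear_combination -key⟩
    have hdvd2 : (2 * (u : ℤ) + 1) ∣ (1 + 2 * y) := hcopZ.dvd_of_dvd_mul_left hdvd
    obtain ⟨k, hk⟩ := hdvd2
    have hkodd : Odd k := by
      have : Odd ((2 * (u : ℤ) + 1) * k) := ⟨y, by linarith⟩
      exact (Int.odd_mul.mp this).2
    obtain ⟨ℓ, hℓ⟩ := hkodd
    refine ⟨ℓ, ?_⟩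
    rw [hy, hk, hℓ]
    ring
  · rintro ⟨ℓ, hℓ⟩
    push_cast at hℓ
    constructor
    · refine ⟨(t : ℤ) * (1 + 2 * ℓ), ?_⟩
      rw [hℓ]; push_cast; ring
    · refine ⟨(u : ℤ) + ℓ * (2 * u + 1), ?_⟩
      rw [hℓ]; push_cast; ring
end

section
/- The group V_{8n} = ⟨a, b : a^{2n} = b⁴ = 1, ba = a⁻¹b⁻¹, b⁻¹a = a⁻¹b⟩ has order 8n, and every element can be written uniquely as a^r b^k with 0 ≤ r ≤ 2n−1 and 0 ≤ k ≤ 3. -/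
/-- Defining relations of the group
`V_{8n} = ⟨a, b : a^{2n} = b⁴ = 1, ba = a⁻¹b⁻¹, b⁻¹a = a⁻¹b⟩`,
as elements of the free group on two generators. -/
def V8nRels (n : ℕ) : Set (FreeGroup (Fin 2)) :=
  {FreeGroup.of 0 ^ (2 * n), FreeGroup.of 1 ^ 4,
   FreeGroup.of 1 * FreeGroup.of 0 * FreeGroup.of 1 * FreeGroup.of 0,
   (FreeGroup.of 1)⁻¹ * FreeGroup.of 0 * (FreeGroup.of 1)⁻¹ * FreeGroup.of 0}

/-- The group `V_{8n}` as a presented group. -/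
abbrev V8n (n : ℕ) := PresentedGroup (V8nRels n)

/-- The generator `a` of `V_{8n}`. -/
def va (n : ℕ) : V8n n := PresentedGroup.of 0

/-- The generator `b` of `V_{8n}`. -/
def vb (n : ℕ) : V8n n := PresentedGroup.of 1


lemma v8n_rel_one {n : ℕ} {r : FreeGroup (Fin 2)} (hr : r ∈ V8nRels n) :
    PresentedGroup.mk (V8nRels n) r = 1 := by
  exact (QuotientGroup.eq_one_iff r).mpr (Subgroup.subset_normalClosure hr)

lemma v8n_ha (n : ℕ) : (va n) ^ (2 * n) = 1 := by
  have := v8n_rel_one (n := n) (r := FreeGroup.of 0 ^ (2 * n)) (by left; rfl)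
  simpa [va, PresentedGroup.of, map_pow] using this

lemma v8n_hb (n : ℕ) : (vb n) ^ 4 = 1 := by
  have := v8n_rel_one (n := n) (r := FreeGroup.of 1 ^ 4) (by right; left; rfl)
  simpa [vb, PresentedGroup.of, map_pow] using this

lemma v8n_hba (n : ℕ) : vb n * va n * vb n * va n = 1 := by
  have := v8n_rel_one (n := n)
    (r := FreeGroup.of 1 * FreeGroup.of 0 * FreeGroup.of 1 * FreeGroup.of 0)
    (by right; right; left; rfl)
  simpa [va, vb, PresentedGroup.of, map_mul] using this

lemma v8n_hb'a (n : ℕ) : (vb n)⁻¹ * va n * (vb n)⁻¹ * va n = 1 := by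
  have := v8n_rel_one (n := n)
    (r := (FreeGroup.of 1)⁻¹ * FreeGroup.of 0 * (FreeGroup.of 1)⁻¹ * FreeGroup.of 0)
    (by right; right; right; rfl)
  simpa [va, vb, PresentedGroup.of, map_mul, map_inv] using this
def vpar (n : ℕ) (r : ZMod (2 * n)) : ZMod 4 :=
  2 * ((ZMod.castHom (dvd_mul_right 2 n) (ZMod 2) r).val : ZMod 4)

lemma vpar_neg (n : ℕ) (r : ZMod (2 * n)) : vpar n (-r) = vpar n r := by
  unfold vpar
  rw [map_neg]
  have h : ∀ x : ZMod 2, -x = x := by decide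
  rw [h]

lemma vpar_add_one (n : ℕ) (r : ZMod (2 * n)) : vpar n r + vpar n (r + 1) = 2 := by
  unfold vpar
  rw [map_add, map_one]
  have h : ∀ x : ZMod 2, 2 * ((x.val : ZMod 4)) + 2 * (((x + 1).val : ZMod 4)) = 2 := by decide
  exact h _

lemma vpar_two_mul (n : ℕ) (r : ZMod (2 * n)) : vpar n r + vpar n r = 0 := by
  unfold vpar
  have h : ∀ x : ZMod 2, 2 * ((x.val : ZMod 4)) + 2 * ((x.val : ZMod 4)) = 0 := by decide
  exact h _

lemma vpar_zero (n : ℕ) : vpar n 0 = 0 := by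
  unfold vpar; rw [map_zero]; decide

def vfB (n : ℕ) : ZMod (2 * n) × ZMod 4 → ZMod (2 * n) × ZMod 4 :=
  fun p => (-p.1, p.2 + 1 + vpar n p.1)

lemma vfB_vfB (n : ℕ) (p : ZMod (2 * n) × ZMod 4) : vfB n (vfB n p) = (p.1, p.2 + 2) := by
  unfold vfB
  simp only [neg_neg, vpar_neg, Prod.mk.injEq, true_and]
  have h := vpar_two_mul n p.1
  have h2 : (1 : ZMod 4) + 1 = 2 := by decide
  linear_combination h + h2

lemma zmod4_add_two_add_two (k : ZMod 4) : k + 2 + 2 = k := by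
  have : (2 : ZMod 4) + 2 = 0 := by decide
  rw [add_assoc, this, add_zero]

def veB (n : ℕ) : Equiv.Perm (ZMod (2 * n) × ZMod 4) where
  toFun := vfB n
  invFun := vfB n ∘ vfB n ∘ vfB n
  left_inv := by
    intro p
    simp only [Function.comp_apply]
    rw [vfB_vfB, vfB_vfB, zmod4_add_two_add_two]
  right_inv := by
    intro p
    simp only [Function.comp_apply]
    rw [vfB_vfB, vfB_vfB, zmod4_add_two_add_two]

def veA (n : ℕ) : Equiv.Perm (ZMod (2 * n) × ZMod 4) :=
  Equiv.addLeft ((1 : ZMod (2 * n)), (0 : ZMod 4))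

lemma veA_apply (n : ℕ) (p : ZMod (2 * n) × ZMod 4) : veA n p = (1 + p.1, p.2) := by
  simp [veA, Prod.add_def]

lemma veB_apply (n : ℕ) (p : ZMod (2 * n) × ZMod 4) :
    veB n p = (-p.1, p.2 + 1 + vpar n p.1) := rfl

lemma veA_pow_apply (n : ℕ) (m : ℕ) (p : ZMod (2 * n) × ZMod 4) :
    (veA n ^ m) p = ((m : ZMod (2 * n)) + p.1, p.2) := by
  induction m generalizing p with
  | zero => simp
  | succ m ih =>
    rw [pow_succ', Equiv.Perm.mul_apply, ih, veA_apply]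
    simp only [Prod.mk.injEq, and_true]
    push_cast
    ring

lemma veB_inv_apply (n : ℕ) (p : ZMod (2 * n) × ZMod 4) :
    (veB n)⁻¹ p = (-p.1, p.2 + 3 + vpar n p.1) := by
  have h : (veB n)⁻¹ p = vfB n (vfB n (vfB n p)) := rfl
  rw [h, vfB_vfB]
  unfold vfB
  simp only [Prod.mk.injEq, neg_neg, true_and]
  ring

lemma veB_pow_apply (n : ℕ) (k : ℕ) (j : ZMod 4) :
    (veB n ^ k) ((0 : ZMod (2 * n)), j) = (0, j + k) := by
  induction k generalizing j with
  | zero => simp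
  | succ k ih =>
    rw [pow_succ', Equiv.Perm.mul_apply, veB_apply, ih]
    simp only [neg_zero, vpar_zero, add_zero, Prod.mk.injEq, true_and]
    push_cast
    ring

lemma veB_four (n : ℕ) : veB n ^ 4 = 1 := by
  refine Equiv.ext fun p => ?_
  have h : (veB n ^ 4) p = vfB n (vfB n (vfB n (vfB n p))) := by
    simp only [pow_succ, pow_zero, one_mul, Equiv.Perm.mul_apply]
    rfl
  rw [h, vfB_vfB, vfB_vfB, zmod4_add_two_add_two]
  rfl

def vF (n : ℕ) : Fin 2 → Equiv.Perm (ZMod (2 * n) × ZMod 4) := ![veA n, veB n]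

lemma vF_rels (n : ℕ) : ∀ r ∈ V8nRels n, FreeGroup.lift (vF n) r = 1 := by
  intro r hr
  rcases hr with h | h | h | h <;> subst h <;>
    simp only [map_pow, map_mul, map_inv, FreeGroup.lift_apply_of, vF, Matrix.cons_val_zero,
      Matrix.cons_val_one, Matrix.head_cons]
  · -- A ^ (2n) = 1
    refine Equiv.ext fun p => ?_
    rw [veA_pow_apply]
    simp [ZMod.natCast_self]
  · exact veB_four n
  · -- BABA = 1
    refine Equiv.ext fun p => ?_
    simp only [Equiv.Perm.mul_apply]
    rw [veA_apply, veB_apply, veA_apply, veB_apply]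
    simp only
    have h1 : (1 : ZMod (2 * n)) + -(1 + p.1) = -p.1 := by ring
    rw [h1, vpar_neg, neg_neg]
    have hpar := vpar_add_one n p.1
    have h2 : p.2 + 1 + vpar n (1 + p.1) + 1 + vpar n p.1 = p.2 := by
      rw [add_comm (1 : ZMod (2 * n)) p.1]
      have h4 : (2 : ZMod 4) + 2 = 0 := by decide
      linear_combination hpar + h4
    rw [h2]
    exact Prod.mk.eta
  · -- B⁻¹AB⁻¹A = 1
    refine Equiv.ext fun p => ?_
    simp only [Equiv.Perm.mul_apply]
    rw [veA_apply, veB_inv_apply, veA_apply, veB_inv_apply]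
    simp only
    have h1 : (1 : ZMod (2 * n)) + -(1 + p.1) = -p.1 := by ring
    rw [h1, vpar_neg, neg_neg]
    have hpar := vpar_add_one n p.1
    have h2 : p.2 + 3 + vpar n (1 + p.1) + 3 + vpar n p.1 = p.2 := by
      rw [add_comm (1 : ZMod (2 * n)) p.1]
      have h8 : (3 : ZMod 4) + 3 + 2 = 0 := by decide
      linear_combination hpar + h8
    rw [h2]
    exact Prod.mk.eta

def vphi (n : ℕ) : V8n n →* Equiv.Perm (ZMod (2 * n) × ZMod 4) :=
  PresentedGroup.toGroup (vF_rels n)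

lemma vphi_eval (n : ℕ) (r k : ℕ) :
    vphi n (va n ^ r * vb n ^ k) (0, 0) = ((r : ZMod (2 * n)), (k : ZMod 4)) := by
  rw [map_mul, map_pow, map_pow]
  have hva : vphi n (va n) = veA n := PresentedGroup.toGroup.of _
  have hvb : vphi n (vb n) = veB n := PresentedGroup.toGroup.of _
  rw [hva, hvb, Equiv.Perm.mul_apply, veB_pow_apply, veA_pow_apply]
  simp

section NF
variable {n : ℕ}

lemma v8n_ainv (hn : 0 < n) : (va n)⁻¹ = va n ^ (2 * n - 1) := by
  have h : va n * va n ^ (2 * n - 1) = 1 := by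
    rw [← pow_succ']
    have h2 : 2 * n - 1 + 1 = 2 * n := by omega
    rw [h2, v8n_ha]
  exact inv_eq_of_mul_eq_one_right h

lemma v8n_binv : (vb n)⁻¹ = vb n ^ 3 := by
  have h : vb n * vb n ^ 3 = 1 := by
    rw [← pow_succ']; exact v8n_hb n
  exact inv_eq_of_mul_eq_one_right h

lemma v8n_ba : vb n * va n = (va n)⁻¹ * (vb n)⁻¹ := by
  have h : (vb n * va n) * (vb n * va n) = 1 := by
    have := v8n_hba n
    rw [← this]; group
  rw [← mul_inv_rev]
  exact eq_inv_of_mul_eq_one_left h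

lemma v8n_b'a : (vb n)⁻¹ * va n = (va n)⁻¹ * vb n := by
  have h : ((vb n)⁻¹ * va n) * ((vb n)⁻¹ * va n) = 1 := by
    have := v8n_hb'a n
    rw [← this]; group
  rw [show (va n)⁻¹ * vb n = ((vb n)⁻¹ * va n)⁻¹ by rw [mul_inv_rev]; group]
  exact eq_inv_of_mul_eq_one_left h

lemma v8n_ba3 (hn : 0 < n) : vb n * va n = va n ^ (2 * n - 1) * vb n ^ 3 := by
  rw [v8n_ba, v8n_ainv hn, v8n_binv]

lemma v8n_b3a (hn : 0 < n) : vb n ^ 3 * va n = va n ^ (2 * n - 1) * vb n := by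
  rw [← v8n_binv, v8n_b'a, v8n_ainv hn]

lemma v8n_L1 (hn : 0 < n) (s : ℕ) :
    ∃ t : ℕ, vb n * va n ^ s = va n ^ t * vb n ∨ vb n * va n ^ s = va n ^ t * vb n ^ 3 := by
  induction s with
  | zero => exact ⟨0, Or.inl (by simp)⟩
  | succ s ih =>
    obtain ⟨t, h | h⟩ := ih
    · refine ⟨t + (2 * n - 1), Or.inr ?_⟩
      rw [pow_succ, ← mul_assoc, h, mul_assoc, v8n_ba3 hn, pow_add, mul_assoc]
    · refine ⟨t + (2 * n - 1), Or.inl ?_⟩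
      rw [pow_succ, ← mul_assoc, h, mul_assoc, v8n_b3a hn, pow_add, mul_assoc]

lemma v8n_key (hn : 0 < n) (k s : ℕ) :
    ∃ t m : ℕ, vb n ^ k * va n ^ s = va n ^ t * vb n ^ m := by
  induction k generalizing s with
  | zero => exact ⟨s, 0, by simp⟩
  | succ k ih =>
    obtain ⟨t₁, h | h⟩ := v8n_L1 hn s
    · obtain ⟨t, m, ih⟩ := ih t₁
      refine ⟨t, m + 1, ?_⟩
      rw [pow_succ]
      calc vb n ^ k * vb n * va n ^ s = vb n ^ k * (vb n * va n ^ s) := by rw [mul_assoc]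
        _ = vb n ^ k * (va n ^ t₁ * vb n) := by rw [h]
        _ = (vb n ^ k * va n ^ t₁) * vb n := by rw [mul_assoc]
        _ = va n ^ t * vb n ^ m * vb n := by rw [ih]
        _ = va n ^ t * vb n ^ (m + 1) := by rw [pow_succ, mul_assoc]
    · obtain ⟨t, m, ih⟩ := ih t₁
      refine ⟨t, m + 3, ?_⟩
      rw [pow_succ]
      calc vb n ^ k * vb n * va n ^ s = vb n ^ k * (vb n * va n ^ s) := by rw [mul_assoc]
        _ = vb n ^ k * (va n ^ t₁ * vb n ^ 3) := by rw [h]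
        _ = (vb n ^ k * va n ^ t₁) * vb n ^ 3 := by rw [mul_assoc]
        _ = va n ^ t * vb n ^ m * vb n ^ 3 := by rw [ih]
        _ = va n ^ t * vb n ^ (m + 3) := by rw [pow_add, mul_assoc]

lemma v8n_surj (hn : 0 < n) (g : V8n n) : ∃ t m : ℕ, g = va n ^ t * vb n ^ m := by
  let S : Subgroup (V8n n) :=
    { carrier := {g | ∃ t m : ℕ, g = va n ^ t * vb n ^ m}
      one_mem' := ⟨0, 0, by simp⟩
      mul_mem' := by
        rintro x y ⟨t, m, rfl⟩ ⟨s, l, rfl⟩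
        obtain ⟨t', m', h⟩ := v8n_key hn m s
        refine ⟨t + t', m' + l, ?_⟩
        calc va n ^ t * vb n ^ m * (va n ^ s * vb n ^ l)
            = va n ^ t * (vb n ^ m * va n ^ s) * vb n ^ l := by group
          _ = va n ^ t * (va n ^ t' * vb n ^ m') * vb n ^ l := by rw [h]
          _ = va n ^ (t + t') * vb n ^ (m' + l) := by rw [pow_add, pow_add]; group
      inv_mem' := by
        rintro x ⟨t, m, rfl⟩
        obtain ⟨t', m', h⟩ := v8n_key hn (3 * m) ((2 * n - 1) * t)
        refine ⟨t', m', ?_⟩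
        calc (va n ^ t * vb n ^ m)⁻¹ = ((vb n)⁻¹) ^ m * ((va n)⁻¹) ^ t := by
              rw [mul_inv_rev, inv_pow, inv_pow]
          _ = (vb n ^ 3) ^ m * (va n ^ (2 * n - 1)) ^ t := by rw [v8n_binv, v8n_ainv hn]
          _ = vb n ^ (3 * m) * va n ^ ((2 * n - 1) * t) := by rw [← pow_mul, ← pow_mul]
          _ = va n ^ t' * vb n ^ m' := h }
  have hS : S = ⊤ := by
    rw [eq_top_iff, ← PresentedGroup.closure_range_of (V8nRels n)]
    rw [Subgroup.closure_le]
    rintro x ⟨i, rfl⟩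
    fin_cases i
    · exact ⟨1, 0, by simp [va]⟩
    · exact ⟨0, 1, by simp [vb]⟩
  have : g ∈ S := by rw [hS]; trivial
  exact this

lemma v8n_pow_a_mod (hn : 0 < n) (t : ℕ) : va n ^ t = va n ^ (t % (2 * n)) := by
  conv_lhs => rw [← Nat.mod_add_div t (2 * n)]
  rw [pow_add, pow_mul, v8n_ha, one_pow, mul_one]

lemma v8n_pow_b_mod (t : ℕ) : vb n ^ t = vb n ^ (t % 4) := by
  conv_lhs => rw [← Nat.mod_add_div t 4]
  rw [pow_add, pow_mul, v8n_hb, one_pow, mul_one]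

end NF

theorem stmt_2 (n : ℕ) (hn : 0 < n) :
    Nat.card (V8n n) = 8 * n ∧
    ∀ g : V8n n, ∃! p : Fin (2 * n) × Fin 4,
      g = va n ^ (p.1 : ℕ) * vb n ^ (p.2 : ℕ) := by
  haveI : NeZero (2 * n) := ⟨by omega⟩
  have hinj : ∀ p q : Fin (2 * n) × Fin 4,
      va n ^ (p.1 : ℕ) * vb n ^ (p.2 : ℕ) = va n ^ (q.1 : ℕ) * vb n ^ (q.2 : ℕ) → p = q := by
    intro p q h
    have := congrArg (fun g => vphi n g ((0 : ZMod (2 * n)), (0 : ZMod 4))) h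
    simp only [vphi_eval] at this
    obtain ⟨h1, h2⟩ := Prod.mk.injEq .. ▸ this
    have e1 : (p.1 : ℕ) = (q.1 : ℕ) := by
      have := congrArg ZMod.val h1
      rwa [ZMod.val_cast_of_lt p.1.isLt, ZMod.val_cast_of_lt q.1.isLt] at this
    have e2 : (p.2 : ℕ) = (q.2 : ℕ) := by
      have := congrArg ZMod.val h2
      rwa [ZMod.val_cast_of_lt p.2.isLt, ZMod.val_cast_of_lt q.2.isLt] at this
    exact Prod.ext (Fin.ext e1) (Fin.ext e2)
  have huniq : ∀ g : V8n n, ∃! p : Fin (2 * n) × Fin 4,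
      g = va n ^ (p.1 : ℕ) * vb n ^ (p.2 : ℕ) := by
    intro g
    obtain ⟨t, m, rfl⟩ := v8n_surj hn g
    refine ⟨(⟨t % (2 * n), Nat.mod_lt _ (by omega)⟩, ⟨m % 4, Nat.mod_lt _ (by omega)⟩), ?_, ?_⟩
    · simp only
      rw [← v8n_pow_a_mod hn, ← v8n_pow_b_mod]
    · intro q hq
      refine hinj q _ ?_
      rw [← hq]
      simp only
      rw [← v8n_pow_a_mod hn, ← v8n_pow_b_mod]
  refine ⟨?_, huniq⟩
  have hbij : Function.Bijective
      (fun p : Fin (2 * n) × Fin 4 => va n ^ (p.1 : ℕ) * vb n ^ (p.2 : ℕ)) := by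
    constructor
    · intro p q h
      exact hinj p q h
    · intro g
      obtain ⟨p, hp, -⟩ := huniq g
      exact ⟨p, hp.symm⟩
  have := Nat.card_eq_of_bijective _ hbij
  rw [← this]
  simp [Nat.card_prod]
  ring
end

section
/- For odd positive integers n, the group V_{8n} has exactly 2n + 3 conjugacy classes. -/
/-!
The relations make `b²` central and give `b a b⁻¹ = a⁻¹ b²`, so every element of `V₈ₙ` is
`aⁱ bʲ` and `|V₈ₙ| ≤ 8n`. For odd `n`, `V₈ₙ` maps onto an explicit group of order `8n` whose
elements are the quadruples `(p, q, e, s)` standing for `aᵏ b²ᵉ (b aⁿ)ˢ`, with `k` split into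
`(k mod 2, k mod n)`; so this map is an isomorphism. In the model, conjugation by `b aⁿ` sends
`(p, q, e, 0)` to `(p, -q, e + p, 0)`, and conjugating an element with `s = 1` by `(p', q', 0, 0)`
adds `(0, 2q', p', 0)` to it. Hence the classes are: for `s = 1` the two parities `p`; for
`s = 0, p = 1` the `n` pairs `{(q, e), (-q, e + 1)}`; for `s = 0, p = 0` the `2 · (n + 1) / 2`
pairs `{(±q, e)}`: `2n + 3` in all.
-/

theorem mul_zpow_eq_of_conj_eq_inv_mul {G : Type*} [Group G] {x y z : G} (hxz : Commute x z)
    (h : y * x * y⁻¹ = x⁻¹ * z) (i : ℤ) : y * x ^ i = x ^ (-i) * z ^ i * y := by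
  have : y * x ^ i * y⁻¹ = x ^ (-i) * z ^ i := by
    rw [← conj_zpow, h, hxz.inv_left.mul_zpow, inv_zpow']
  rw [← this, inv_mul_cancel_right]

theorem card_conjClasses_eq_of_section {G T : Type*} [Group G] (f : G → T) (r : T → G)
    (hf : ∀ g x, f (g * x * g⁻¹) = f x) (hfr : ∀ t, f (r t) = t)
    (hrf : ∀ x, IsConj x (r (f x))) : Nat.card (ConjClasses G) = Nat.card T :=
  Nat.card_congr
    { toFun := Quotient.lift f fun x y hxy => by
        obtain ⟨c, rfl⟩ := isConj_iff.1 hxy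
        exact (hf c x).symm
      invFun t := ConjClasses.mk (r t)
      left_inv := by
        rintro ⟨x⟩
        exact ConjClasses.mk_eq_mk_iff_isConj.2 (hrf x).symm
      right_inv := hfr }

theorem card_conjClasses_congr {G H : Type*} [Group G] [Group H] (e : G ≃* H) :
    Nat.card (ConjClasses G) = Nat.card (ConjClasses H) :=
  Nat.card_congr <| Quotient.congr e.toEquiv fun x y => by
    change IsConj x y ↔ IsConj (e x) (e y)
    refine ⟨e.toMonoidHom.map_isConj, fun h => ?_⟩
    simpa using e.symm.toMonoidHom.map_isConj h

namespace ZMod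

theorem eq_zero_or_eq_one (a : ZMod 2) : a = 0 ∨ a = 1 := by
  decide +revert

theorem isUnit_two {n : ℕ} (hn : Odd n) : IsUnit (2 : ZMod n) := by
  exact_mod_cast (isUnit_iff_coprime 2 n).2 (Nat.coprime_two_left.2 hn)

/-- Burnside's lemma for `±1` acting on `ZMod n`: only `0` is fixed by `-1`. -/
theorem card_orbitRel_units_int {n : ℕ} (hn : Odd n) :
    Nat.card (MulAction.orbitRel.Quotient ℤˣ (ZMod n)) = (n + 1) / 2 := by
  classical
  have : NeZero n := ⟨hn.pos.ne'⟩
  have hfix : MulAction.fixedBy (ZMod n) (-1 : ℤˣ) = {0} := by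
    ext x
    simp only [MulAction.mem_fixedBy, Units.neg_smul, one_smul, Set.mem_singleton_iff]
    refine ⟨fun hx => (isUnit_two hn).mul_left_cancel ?_, fun h => by simp [h]⟩
    linear_combination -hx
  have burnside := MulAction.sum_card_fixedBy_eq_card_orbits_mul_card_group ℤˣ (ZMod n)
  simp only [UnitsInt.univ, Finset.sum_insert (by decide : (1 : ℤˣ) ∉ ({-1} : Finset ℤˣ)),
    Finset.sum_singleton, Fintype.card_units_int, MulAction.fixedBy_one_eq_univ] at burnside
  rw [Fintype.card_congr (Equiv.setCongr hfix), Fintype.card_congr (Equiv.Set.univ _)] at burnside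
  simp only [card, Fintype.card_unique] at burnside
  rw [← Nat.card_eq_fintype_card] at burnside
  change _ = Nat.card (MulAction.orbitRel.Quotient ℤˣ (ZMod n)) * 2 at burnside
  omega

end ZMod

namespace V8n

variable {n : ℕ}

local notation "a" => va n
local notation "b" => vb n

lemma va_pow_two_mul : a ^ (2 * n) = 1 := by
  have := PresentedGroup.one_of_mem (rels := V8nRels n) (x := .of 0 ^ (2 * n)) (by simp [V8nRels])
  rwa [map_pow] at this

lemma vb_pow_four : b ^ 4 = 1 := by
  have := PresentedGroup.one_of_mem (rels := V8nRels n) (x := .of 1 ^ 4) (by simp [V8nRels])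
  rwa [map_pow] at this

lemma vb_mul_va_mul_vb_mul_va : b * a * b * a = 1 := by
  have := PresentedGroup.one_of_mem (rels := V8nRels n) (x := .of 1 * .of 0 * .of 1 * .of 0)
    (by simp [V8nRels])
  rwa [map_mul, map_mul, map_mul] at this

lemma vb_inv_mul_va_mul_vb_inv_mul_va : b⁻¹ * a * b⁻¹ * a = 1 := by
  have := PresentedGroup.one_of_mem (rels := V8nRels n)
    (x := (.of 1)⁻¹ * .of 0 * (.of 1)⁻¹ * .of 0) (by simp [V8nRels])
  rwa [map_mul, map_mul, map_mul, map_inv] at this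

lemma vb_sq_inv : (b ^ 2)⁻¹ = b ^ 2 :=
  inv_eq_of_mul_eq_one_right (by rw [← pow_add, vb_pow_four])

lemma vb_conj_va : b * a * b⁻¹ = a⁻¹ * b ^ 2 := by
  have h : b * a * b = a⁻¹ := eq_inv_of_mul_eq_one_left vb_mul_va_mul_vb_mul_va
  calc b * a * b⁻¹ = b * a * b * (b ^ 2)⁻¹ := by group
    _ = a⁻¹ * b ^ 2 := by rw [h, vb_sq_inv]

lemma vb_inv_conj_va : b⁻¹ * a * b = a⁻¹ * b ^ 2 := by
  have h : b⁻¹ * a * b⁻¹ = a⁻¹ := eq_inv_of_mul_eq_one_left vb_inv_mul_va_mul_vb_inv_mul_va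
  calc b⁻¹ * a * b = b⁻¹ * a * b⁻¹ * b ^ 2 := by group
    _ = a⁻¹ * b ^ 2 := by rw [h]

lemma commute_va_vb_sq : Commute a (b ^ 2) :=
  calc a * b ^ 2 = b * (b⁻¹ * a * b) * b := by rw [pow_two]; group
    _ = b * (b * a * b⁻¹) * b := by rw [vb_conj_va, vb_inv_conj_va]
    _ = b ^ 2 * a := by rw [pow_two]; group

lemma vb_mul_va_zpow (i : ℤ) : b * a ^ i = a ^ (-i) * b ^ (2 * i + 1) := by
  rw [mul_zpow_eq_of_conj_eq_inv_mul commute_va_vb_sq vb_conj_va, ← zpow_natCast, ← zpow_mul,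
    mul_assoc, ← zpow_add_one]
  rfl

lemma vb_inv_mul_va_zpow (i : ℤ) : b⁻¹ * a ^ i = a ^ (-i) * b ^ (2 * i - 1) := by
  rw [mul_zpow_eq_of_conj_eq_inv_mul commute_va_vb_sq (by simpa using vb_inv_conj_va),
    ← zpow_natCast, ← zpow_mul, mul_assoc, ← zpow_sub_one]
  rfl

lemma exists_eq_va_zpow_mul_vb_zpow (g : V8n n) : ∃ i j : ℤ, g = a ^ i * b ^ j := by
  have hg : g ∈ Subgroup.closure (Set.range (PresentedGroup.of : Fin 2 → V8n n)) := by simp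
  induction hg using Subgroup.closure_induction_left with
  | one => exact ⟨0, 0, by simp⟩
  | mul_left x hx y _ ih =>
    obtain ⟨k, rfl⟩ := hx
    obtain ⟨i, j, rfl⟩ := ih
    fin_cases k
    · exact ⟨1 + i, j, by rw [zpow_one_add, mul_assoc]; rfl⟩
    · refine ⟨-i, 2 * i + 1 + j, ?_⟩
      rw [← mul_assoc, zpow_add _ (2 * i + 1), ← mul_assoc, ← vb_mul_va_zpow]
      rfl
  | inv_mul_cancel x hx y _ ih =>
    obtain ⟨k, rfl⟩ := hx
    obtain ⟨i, j, rfl⟩ := ih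
    fin_cases k
    · exact ⟨-1 + i, j, by rw [zpow_add, zpow_neg_one, mul_assoc]; rfl⟩
    · refine ⟨-i, 2 * i - 1 + j, ?_⟩
      rw [← mul_assoc, zpow_add _ (2 * i - 1), ← mul_assoc, ← vb_inv_mul_va_zpow]
      rfl

lemma surjective_va_pow_mul_vb_pow [NeZero n] :
    Function.Surjective fun x : ZMod (2 * n) × ZMod 4 => a ^ x.1.val * b ^ x.2.val := by
  intro g
  obtain ⟨i, j, rfl⟩ := exists_eq_va_zpow_mul_vb_zpow g
  refine ⟨(i, j), ?_⟩
  dsimp only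
  rw [← zpow_natCast, ← zpow_natCast, ZMod.val_intCast, ZMod.val_intCast,
    ← zpow_eq_zpow_emod' _ va_pow_two_mul, ← zpow_eq_zpow_emod' _ vb_pow_four]

instance [NeZero n] : Finite (V8n n) := .of_surjective _ surjective_va_pow_mul_vb_pow

lemma card_le [NeZero n] : Nat.card (V8n n) ≤ 8 * n := by
  have := Nat.card_le_card_of_surjective _ (surjective_va_pow_mul_vb_pow (n := n))
  simp only [Nat.card_prod, Nat.card_zmod] at this
  linarith

/-- `⟨p, q, e, s⟩` stands for `aᵏ b²ᵉ (b aⁿ)ˢ`, where `k ∈ ZMod (2n)` has residues `p` mod 2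
and `q` mod `n`. -/
@[ext]
structure Model (n : ℕ) where
  p : ZMod 2
  q : ZMod n
  e : ZMod 2
  s : ZMod 2

namespace Model

instance : Mul (Model n) :=
  ⟨fun x y => ⟨x.p + y.p, x.q + (-1 : ℤˣ) ^ x.s • y.q, x.e + y.e + x.s * y.p, x.s + y.s⟩⟩

instance : One (Model n) := ⟨⟨0, 0, 0, 0⟩⟩

instance : Inv (Model n) := ⟨fun x => ⟨x.p, -((-1 : ℤˣ) ^ x.s • x.q), x.e + x.s * x.p, x.s⟩⟩

@[simp] lemma mul_p (x y : Model n) : (x * y).p = x.p + y.p := rfl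
@[simp] lemma mul_q (x y : Model n) : (x * y).q = x.q + (-1 : ℤˣ) ^ x.s • y.q := rfl
@[simp] lemma mul_e (x y : Model n) : (x * y).e = x.e + y.e + x.s * y.p := rfl
@[simp] lemma mul_s (x y : Model n) : (x * y).s = x.s + y.s := rfl
@[simp] lemma one_p : (1 : Model n).p = 0 := rfl
@[simp] lemma one_q : (1 : Model n).q = 0 := rfl
@[simp] lemma one_e : (1 : Model n).e = 0 := rfl
@[simp] lemma one_s : (1 : Model n).s = 0 := rfl
@[simp] lemma inv_p (x : Model n) : x⁻¹.p = x.p := rfl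
@[simp] lemma inv_q (x : Model n) : x⁻¹.q = -((-1 : ℤˣ) ^ x.s • x.q) := rfl
@[simp] lemma inv_e (x : Model n) : x⁻¹.e = x.e + x.s * x.p := rfl
@[simp] lemma inv_s (x : Model n) : x⁻¹.s = x.s := rfl

instance : Group (Model n) := Group.ofLeftAxioms
  (fun x y z => by
    ext <;> simp only [mul_p, mul_q, mul_e, mul_s, uzpow_add, mul_smul, smul_add] <;> ring)
  (fun x => by ext <;> simp)
  (fun x => by
    ext <;> simp only [mul_p, mul_q, mul_e, mul_s, inv_p, inv_q, inv_e, inv_s, one_p, one_q, one_e,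
      one_s, neg_add_cancel] <;> grind)

lemma mul_mul_inv_eq (g x : Model n) : g * x * g⁻¹ =
    ⟨x.p, (-1 : ℤˣ) ^ g.s • x.q + g.q - (-1 : ℤˣ) ^ x.s • g.q,
      x.e + g.s * x.p + x.s * g.p, x.s⟩ := by
  ext
  · simp only [mul_p, inv_p]
    grind
  · simp only [mul_q, mul_s, inv_q, uzpow_add, smul_neg, smul_smul,
      mul_right_comm _ _ ((-1 : ℤˣ) ^ g.s), Int.units_mul_self, one_mul]
    abel
  · simp only [mul_e, mul_s, inv_e, inv_p]
    grind
  · simp only [mul_s, inv_s]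
    grind

abbrev ClassIndex (n : ℕ) :=
  ZMod 2 ⊕ ZMod n ⊕ (MulAction.orbitRel.Quotient ℤˣ (ZMod n) × ZMod 2)

def classIndex (x : Model n) : ClassIndex n :=
  if x.s = 1 then .inl x.p
  else if x.p = 1 then .inr (.inl ((-1 : ℤˣ) ^ x.e • x.q))
  else .inr (.inr (⟦x.q⟧, x.e))

noncomputable def classRep : ClassIndex n → Model n
  | .inl p => ⟨p, 0, 0, 1⟩
  | .inr (.inl q) => ⟨1, q, 0, 0⟩
  | .inr (.inr (c, e)) => ⟨0, c.out, e, 0⟩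

lemma classIndex_conj (g x : Model n) : classIndex (g * x * g⁻¹) = classIndex x := by
  rw [mul_mul_inv_eq]
  rcases ZMod.eq_zero_or_eq_one x.s with hs | hs
  · rcases ZMod.eq_zero_or_eq_one x.p with hp | hp
    · simp [classIndex, hs, hp]
    · simp [classIndex, hs, hp, uzpow_add, smul_smul, mul_assoc, Int.units_mul_self]
  · simp [classIndex, hs]

lemma classIndex_classRep (t : ClassIndex n) : classIndex (classRep t) = t := by
  rcases t with p | q | ⟨c, e⟩ <;> simp [classRep, classIndex]

lemma isConj_classRep_classIndex (hn : Odd n) (x : Model n) :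
    IsConj x (classRep (classIndex x)) := by
  rw [isConj_iff]
  rcases ZMod.eq_zero_or_eq_one x.s with hs | hs
  · rcases ZMod.eq_zero_or_eq_one x.p with hp | hp
    · obtain ⟨u, hu⟩ := MulAction.orbitRel_apply.1
        (Quotient.mk_out (s := MulAction.orbitRel ℤˣ (ZMod n)) x.q)
      obtain ⟨t, rfl⟩ : ∃ t : ZMod 2, (-1 : ℤˣ) ^ t = u := by
        rcases Int.units_eq_one_or u with rfl | rfl
        exacts [⟨0, by simp⟩, ⟨1, by simp⟩]
      refine ⟨⟨0, 0, 0, t⟩, ?_⟩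
      rw [mul_mul_inv_eq]
      ext <;> simp [classIndex, classRep, hs, hp, hu]
    · refine ⟨⟨0, 0, 0, x.e⟩, ?_⟩
      rw [mul_mul_inv_eq]
      ext <;> simp [classIndex, classRep, hs, hp, CharTwo.add_self_eq_zero]
  · obtain ⟨h, hh⟩ := (ZMod.isUnit_two hn).exists_right_inv
    refine ⟨⟨x.e, -(h * x.q), 0, 0⟩, ?_⟩
    rw [mul_mul_inv_eq]
    ext <;> simp only [classIndex, classRep, hs, ↓reduceIte, uzpow_zero, uzpow_one, one_smul,
      smul_neg, Units.neg_smul, neg_neg, zero_mul, one_mul, add_zero, CharTwo.add_self_eq_zero]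
    linear_combination -x.q * hh

lemma card_classIndex (hn : Odd n) : Nat.card (ClassIndex n) = 2 * n + 3 := by
  have : NeZero n := ⟨hn.pos.ne'⟩
  simp only [Nat.card_sum, Nat.card_prod, Nat.card_zmod, ZMod.card_orbitRel_units_int hn]
  obtain ⟨k, rfl⟩ := hn
  omega

lemma card_conjClasses (hn : Odd n) : Nat.card (ConjClasses (Model n)) = 2 * n + 3 := by
  rw [card_conjClasses_eq_of_section classIndex classRep classIndex_conj classIndex_classRep
    (isConj_classRep_classIndex hn), card_classIndex hn]

def equivProd : Model n ≃ ZMod 2 × ZMod n × ZMod 2 × ZMod 2 where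
  toFun x := (x.p, x.q, x.e, x.s)
  invFun y := ⟨y.1, y.2.1, y.2.2.1, y.2.2.2⟩

lemma card : Nat.card (Model n) = 8 * n := by
  rw [Nat.card_congr equivProd]
  simp only [Nat.card_prod, Nat.card_zmod]
  ring

lemma pow_of_s_eq_zero (p : ZMod 2) (q : ZMod n) (e : ZMod 2) (m : ℕ) :
    (⟨p, q, e, 0⟩ : Model n) ^ m = ⟨m * p, m * q, m * e, 0⟩ := by
  induction m with
  | zero => ext <;> simp
  | succ m ih =>
    rw [pow_succ, ih]
    ext <;> simp only [mul_p, mul_q, mul_e, mul_s, uzpow_zero, one_smul, zero_mul, add_zero,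
      Nat.cast_add, Nat.cast_one] <;> ring

lemma pow_of_p_q_e_eq_zero (s : ZMod 2) (m : ℕ) :
    (⟨0, 0, 0, s⟩ : Model n) ^ m = ⟨0, 0, 0, m * s⟩ := by
  induction m with
  | zero => ext <;> simp
  | succ m ih =>
    rw [pow_succ, ih]
    ext <;> simp only [mul_p, mul_q, mul_e, mul_s, smul_zero, mul_zero, add_zero, Nat.cast_add,
      Nat.cast_one]
    ring

end Model

def toModel : V8n n →* Model n :=
  PresentedGroup.toGroup (f := ![⟨1, 1, 0, 0⟩, ⟨1, 0, 1, 1⟩]) <| by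
    rintro r (rfl | rfl | rfl | rfl) <;>
      simp only [map_pow, map_mul, map_inv, FreeGroup.lift_apply_of, Matrix.cons_val_zero,
        Matrix.cons_val_one, Matrix.cons_val_fin_one, Model.pow_of_s_eq_zero] <;> ext <;>
      simp [pow_succ, one_add_one_eq_two, CharTwo.two_eq_zero]

@[simp] lemma toModel_va : toModel a = ⟨1, 1, 0, 0⟩ := PresentedGroup.toGroup.of _
@[simp] lemma toModel_vb : toModel b = ⟨1, 0, 1, 1⟩ := PresentedGroup.toGroup.of _

lemma toModel_surjective (hn : Odd n) : Function.Surjective (toModel (n := n)) := by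
  have : NeZero n := ⟨hn.pos.ne'⟩
  have hn2 : (n : ZMod 2) = 1 := hn.natCast_zmod_two
  intro x
  -- `n p + (n + 1) q` is `p` mod 2 and `q` mod `n`
  refine ⟨a ^ (n * x.p.val + (n + 1) * x.q.val) * (b ^ 2) ^ x.e.val * (b * a ^ n) ^ x.s.val, ?_⟩
  have hb2 : toModel (b ^ 2) = ⟨0, 0, 1, 0⟩ := by
    ext <;> simp [pow_two, CharTwo.add_self_eq_zero]
  have hba : toModel (b * a ^ n) = ⟨0, 0, 0, 1⟩ := by
    ext <;> simp [Model.pow_of_s_eq_zero, hn2, CharTwo.add_self_eq_zero]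
  simp only [map_mul, map_pow, toModel_va, hb2, hba, Model.pow_of_s_eq_zero,
    Model.pow_of_p_q_e_eq_zero]
  ext <;> simp [hn2, CharTwo.add_self_eq_zero]

end V8n

theorem stmt_4 (n : ℕ) (hn : Odd n) :
    Nat.card (ConjClasses (V8n n)) = 2 * n + 3 := by
  have : NeZero n := ⟨hn.pos.ne'⟩
  have hbij : Function.Bijective (V8n.toModel (n := n)) :=
    (V8n.toModel_surjective hn).bijective_of_nat_card_le (V8n.card_le.trans V8n.Model.card.ge)
  rw [card_conjClasses_congr (MulEquiv.ofBijective _ hbij), V8n.Model.card_conjClasses hn]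
end

section
/- For odd n, in the group V_{8n}, the set {a^{2r+1}, a^{-(2r+1)}b²} is a conjugacy class for each r ∈ {0, …, n−1}. -/
namespace V8nAux

variable {n : ℕ}

lemma rel_eq_one {w : FreeGroup (Fin 2)} (hw : w ∈ V8nRels n) :
    PresentedGroup.mk (V8nRels n) w = 1 :=
  (QuotientGroup.eq_one_iff w).mpr (Subgroup.subset_normalClosure hw)

lemma hb4 : vb n ^ 4 = 1 := by
  have := rel_eq_one (n := n) (by simp [V8nRels] : FreeGroup.of 1 ^ 4 ∈ V8nRels n)
  simpa [vb, PresentedGroup.of, map_pow] using this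

lemma hrel3 : vb n * va n * vb n * va n = 1 := by
  have := rel_eq_one (n := n)
    (by simp [V8nRels] : FreeGroup.of 1 * FreeGroup.of 0 * FreeGroup.of 1 * FreeGroup.of 0 ∈ V8nRels n)
  simpa [vb, va, PresentedGroup.of, map_mul] using this

lemma hrel4 : (vb n)⁻¹ * va n * (vb n)⁻¹ * va n = 1 := by
  have := rel_eq_one (n := n)
    (by simp [V8nRels] : (FreeGroup.of 1)⁻¹ * FreeGroup.of 0 * (FreeGroup.of 1)⁻¹ * FreeGroup.of 0 ∈ V8nRels n)
  simpa [vb, va, PresentedGroup.of, map_mul, map_inv] using this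

lemma h1 : vb n * va n = (va n)⁻¹ * (vb n)⁻¹ := by
  have h : (vb n * va n) * (vb n * va n) = 1 := by
    rw [← hrel3 (n := n)]; group
  have := eq_inv_of_mul_eq_one_left h
  rw [this]; group

lemma h2 : (vb n)⁻¹ * va n = (va n)⁻¹ * vb n := by
  have h : ((vb n)⁻¹ * va n) * ((vb n)⁻¹ * va n) = 1 := by
    rw [← hrel4 (n := n)]; group
  have := eq_inv_of_mul_eq_one_left h
  rw [this]; group

lemma hz2 : vb n ^ 2 * vb n ^ 2 = 1 := by
  rw [← hb4 (n := n)]; group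

lemma hzinv : (vb n ^ 2)⁻¹ = vb n ^ 2 := inv_eq_of_mul_eq_one_left hz2

lemma a2' : (va n)⁻¹ = (vb n)⁻¹ * va n * (vb n)⁻¹ := by
  rw [h2]; group

lemma hcomm : vb n ^ 2 * va n = va n * vb n ^ 2 := by
  calc vb n ^ 2 * va n = vb n * (vb n * va n) := by rw [pow_two]; group
    _ = vb n * ((va n)⁻¹ * (vb n)⁻¹) := by rw [h1]
    _ = vb n * (((vb n)⁻¹ * va n * (vb n)⁻¹) * (vb n)⁻¹) := by rw [← a2']
    _ = va n * (vb n ^ 2)⁻¹ := by rw [pow_two]; group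
    _ = va n * vb n ^ 2 := by rw [hzinv]

lemma hc : Commute (va n) (vb n ^ 2) := hcomm.symm

lemma hbab : vb n * va n * (vb n)⁻¹ = (va n)⁻¹ * vb n ^ 2 := by
  rw [h1, ← hzinv]; group

lemma hconj (k : ℕ) : vb n * va n ^ k * (vb n)⁻¹ = (va n)⁻¹ ^ k * (vb n ^ 2) ^ k := by
  induction k with
  | zero => group
  | succ k ih =>
    have step : vb n * va n ^ (k + 1) * (vb n)⁻¹
        = (vb n * va n ^ k * (vb n)⁻¹) * (vb n * va n * (vb n)⁻¹) := by group
    rw [step, ih, hbab, pow_succ, pow_succ]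
    have hck : Commute ((vb n ^ 2) ^ k) ((va n)⁻¹) := ((hc (n := n)).inv_left.pow_right k).symm
    calc (va n)⁻¹ ^ k * (vb n ^ 2) ^ k * ((va n)⁻¹ * vb n ^ 2)
        = (va n)⁻¹ ^ k * ((vb n ^ 2) ^ k * (va n)⁻¹) * vb n ^ 2 := by group
      _ = (va n)⁻¹ ^ k * ((va n)⁻¹ * (vb n ^ 2) ^ k) * vb n ^ 2 := by rw [hck.eq]
      _ = (va n)⁻¹ ^ k * (va n)⁻¹ * ((vb n ^ 2) ^ k * vb n ^ 2) := by group

lemma hzpow (r : ℕ) : (vb n ^ 2) ^ (2 * r + 1) = vb n ^ 2 := by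
  have : (vb n ^ 2) ^ 2 = 1 := by rw [pow_two]; exact hz2
  rw [pow_add, pow_mul, this, one_pow, one_mul, pow_one]

lemma hbx (r : ℕ) :
    vb n * va n ^ (2 * r + 1) * (vb n)⁻¹ = (va n ^ (2 * r + 1))⁻¹ * vb n ^ 2 := by
  rw [hconj, hzpow, inv_pow]

lemma hby (r : ℕ) :
    vb n * ((va n ^ (2 * r + 1))⁻¹ * vb n ^ 2) * (vb n)⁻¹ = va n ^ (2 * r + 1) := by
  have hbz : vb n * vb n ^ 2 * (vb n)⁻¹ = vb n ^ 2 := by group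
  have hcx : Commute (va n ^ (2 * r + 1)) (vb n ^ 2) := (hc (n := n)).pow_left _
  calc vb n * ((va n ^ (2 * r + 1))⁻¹ * vb n ^ 2) * (vb n)⁻¹
      = (vb n * va n ^ (2 * r + 1) * (vb n)⁻¹)⁻¹ * (vb n * vb n ^ 2 * (vb n)⁻¹) := by group
    _ = ((va n ^ (2 * r + 1))⁻¹ * vb n ^ 2)⁻¹ * vb n ^ 2 := by rw [hbx, hbz]
    _ = (vb n ^ 2)⁻¹ * (va n ^ (2 * r + 1) * vb n ^ 2) := by group
    _ = (vb n ^ 2)⁻¹ * (vb n ^ 2 * va n ^ (2 * r + 1)) := by rw [hcx.eq]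
    _ = va n ^ (2 * r + 1) := by group

lemma hax (r : ℕ) :
    va n * va n ^ (2 * r + 1) * (va n)⁻¹ = va n ^ (2 * r + 1) := by group

lemma hay (r : ℕ) :
    va n * ((va n ^ (2 * r + 1))⁻¹ * vb n ^ 2) * (va n)⁻¹
      = (va n ^ (2 * r + 1))⁻¹ * vb n ^ 2 := by
  have haz : va n * vb n ^ 2 * (va n)⁻¹ = vb n ^ 2 := by rw [← hcomm]; group
  calc va n * ((va n ^ (2 * r + 1))⁻¹ * vb n ^ 2) * (va n)⁻¹
      = (va n ^ (2 * r + 1))⁻¹ * (va n * vb n ^ 2 * (va n)⁻¹) := by group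
    _ = (va n ^ (2 * r + 1))⁻¹ * vb n ^ 2 := by rw [haz]

lemma conj_cases (n : ℕ) (x y : V8n n)
    (hax : va n * x * (va n)⁻¹ = x) (hay : va n * y * (va n)⁻¹ = y)
    (hbx : vb n * x * (vb n)⁻¹ = y) (hby : vb n * y * (vb n)⁻¹ = x) (g : V8n n) :
    (g * x * g⁻¹ = x ∧ g * y * g⁻¹ = y) ∨ (g * x * g⁻¹ = y ∧ g * y * g⁻¹ = x) := by
  let H : Subgroup (V8n n) :=
    { carrier := {g | (g * x * g⁻¹ = x ∧ g * y * g⁻¹ = y) ∨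
        (g * x * g⁻¹ = y ∧ g * y * g⁻¹ = x)}
      one_mem' := Or.inl ⟨by group, by group⟩
      mul_mem' := by
        rintro g h hg hh
        have e : ∀ u : V8n n, (g * h) * u * (g * h)⁻¹ = g * (h * u * h⁻¹) * g⁻¹ :=
          fun u => by group
        rcases hh with ⟨hh1, hh2⟩ | ⟨hh1, hh2⟩ <;> rcases hg with ⟨hg1, hg2⟩ | ⟨hg1, hg2⟩
        · exact Or.inl ⟨by rw [e, hh1, hg1], by rw [e, hh2, hg2]⟩
        · exact Or.inr ⟨by rw [e, hh1, hg1], by rw [e, hh2, hg2]⟩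
        · exact Or.inr ⟨by rw [e, hh1, hg2], by rw [e, hh2, hg1]⟩
        · exact Or.inl ⟨by rw [e, hh1, hg2], by rw [e, hh2, hg1]⟩
      inv_mem' := by
        rintro g (⟨hg1, hg2⟩ | ⟨hg1, hg2⟩)
        · refine Or.inl ⟨?_, ?_⟩
          · show g⁻¹ * x * g⁻¹⁻¹ = x
            conv_lhs => rw [← hg1]
            group
          · show g⁻¹ * y * g⁻¹⁻¹ = y
            conv_lhs => rw [← hg2]
            group
        · refine Or.inr ⟨?_, ?_⟩
          · show g⁻¹ * x * g⁻¹⁻¹ = y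
            conv_lhs => rw [← hg2]
            group
          · show g⁻¹ * y * g⁻¹⁻¹ = x
            conv_lhs => rw [← hg1]
            group }
  refine PresentedGroup.generated_by _ H ?_ g
  intro j
  fin_cases j
  · exact Or.inl ⟨hax, hay⟩
  · exact Or.inr ⟨hbx, hby⟩

end V8nAux

theorem stmt_6 (n : ℕ) (hn : Odd n) (r : ℕ) (hr : r < n) :
    {x : V8n n | IsConj (va n ^ (2 * r + 1)) x} =
      {va n ^ (2 * r + 1), (va n ^ (2 * r + 1))⁻¹ * vb n ^ 2} := by
  ext u
  simp only [Set.mem_setOf_eq, Set.mem_insert_iff, Set.mem_singleton_iff]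
  constructor
  · intro hconj
    rcases isConj_iff.1 hconj with ⟨g, hg⟩
    rcases V8nAux.conj_cases n (va n ^ (2 * r + 1)) ((va n ^ (2 * r + 1))⁻¹ * vb n ^ 2) (V8nAux.hax r) (V8nAux.hay r) (V8nAux.hbx r)
        (V8nAux.hby r) g with ⟨h1, _⟩ | ⟨h1, _⟩
    · exact Or.inl (hg.symm.trans h1)
    · exact Or.inr (hg.symm.trans h1)
  · rintro (rfl | rfl)
    · exact IsConj.refl _
    · refine isConj_iff.mpr ⟨(vb n)⁻¹, ?_⟩
      conv_lhs => rw [← V8nAux.hby (n := n) r]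
      group
end

section
/- For odd n, the map ψ_j sending a to the 2×2 matrix diag(ω^{2j}, −ω^{−2j}) and b to the matrix [[0,1],[−1,0]], where ω = exp(πi/n), extends to a group homomorphism from V_{8n} to GL₂(ℂ) for each 0 ≤ j ≤ n−1. -/
/-!
Conjugation by `b = !![0, 1; -1, 0]` swaps diagonal entries, so it sends `a = diag(x, -x⁻¹)`
to `-a⁻¹`; together with `b² = -1` this gives `(ba)² = (b⁻¹a)² = 1`, for every unit `x`.
The only relation that constrains `x` is `a^{2n} = diag(x^{2n}, x^{-2n}) = 1`, and it holds because
`x = ω^{2j}` with `ω^{2n} = exp(2πi) = 1`.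
-/

namespace V8n

variable {n : ℕ} {G : Type*} [Group G]

def lift (g h : G) (hg : g ^ (2 * n) = 1) (hh : h ^ 4 = 1) (hhg : h * g * h * g = 1)
    (hhg' : h⁻¹ * g * h⁻¹ * g = 1) : V8n n →* G :=
  PresentedGroup.toGroup (f := ![g, h]) <| by
    rintro r (rfl | rfl | rfl | rfl) <;> simpa

variable {g h : G} {hg : g ^ (2 * n) = 1} {hh : h ^ 4 = 1} {hhg : h * g * h * g = 1}
  {hhg' : h⁻¹ * g * h⁻¹ * g = 1}

@[simp]
lemma lift_va : lift g h hg hh hhg hhg' (va n) = g :=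
  PresentedGroup.toGroup.of _

@[simp]
lemma lift_vb : lift g h hg hh hhg hhg' (vb n) = h :=
  PresentedGroup.toGroup.of _

end V8n

namespace Matrix.GeneralLinearGroup

section Diagonal

variable {ι R : Type*} [Fintype ι] [DecidableEq ι] [CommRing R]

def diagonal : (ι → Rˣ) →* GL ι R :=
  (Units.map (diagonalRingHom ι R).toMonoidHom).comp MulEquiv.piUnits.symm.toMonoidHom

@[simp]
lemma val_diagonal (d : ι → Rˣ) : (diagonal d : Matrix ι ι R) = Matrix.diagonal (d · : ι → R) :=
  rfl

end Diagonal

variable {R : Type*} [CommRing R]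

def quarterTurn : GL (Fin 2) R :=
  ⟨!![0, 1; -1, 0], !![0, -1; 1, 0], by simp [one_fin_two], by simp [one_fin_two]⟩

lemma quarterTurn_pow_four : (quarterTurn : GL (Fin 2) R) ^ 4 = 1 := by
  ext1
  simp [quarterTurn, pow_succ, one_fin_two]

lemma diagonal_neg_inv_pow_eq_one {u : Rˣ} {n : ℕ} (hu : u ^ (2 * n) = 1) :
    diagonal ![u, -u⁻¹] ^ (2 * n) = 1 := by
  rw [← map_pow, ← map_one diagonal]
  congr 1
  ext i
  fin_cases i <;> simp [hu, Even.neg_pow ⟨n, two_mul n⟩, inv_pow]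

lemma quarterTurn_mul_diagonal_neg_inv_sq (u : Rˣ) :
    quarterTurn * diagonal ![u, -u⁻¹] * quarterTurn * diagonal ![u, -u⁻¹] = 1 := by
  ext1
  simp [quarterTurn, diagonal_fin_two, one_fin_two]

lemma inv_quarterTurn_mul_diagonal_neg_inv_sq (u : Rˣ) :
    quarterTurn⁻¹ * diagonal ![u, -u⁻¹] * quarterTurn⁻¹ * diagonal ![u, -u⁻¹] = 1 := by
  ext1
  simp [quarterTurn, diagonal_fin_two, one_fin_two]

end Matrix.GeneralLinearGroup

lemma Complex.exp_pi_mul_I_div_pow_two_mul (n : ℕ) :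
    Complex.exp (Real.pi * Complex.I / n) ^ (2 * n) = 1 := by
  rcases eq_or_ne n 0 with rfl | hn
  · simp
  rw [← Complex.exp_nat_mul, ← Complex.exp_two_pi_mul_I]
  congr 1
  field_simp
  push_cast
  ring

open Matrix Complex in
theorem stmt_7_general (n : ℕ) (j : ℕ) :
    ∃ ρ : V8n n →* GL (Fin 2) ℂ,
      (ρ (va n) : Matrix (Fin 2) (Fin 2) ℂ) =
        !![Complex.exp (Real.pi * Complex.I / n) ^ (2 * j), 0;
           0, -(Complex.exp (Real.pi * Complex.I / n) ^ (2 * j))⁻¹] ∧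
      (ρ (vb n) : Matrix (Fin 2) (Fin 2) ℂ) = !![0, 1; -1, 0] := by
  set u : ℂˣ := Units.mk0 (Complex.exp (Real.pi * Complex.I / n)) (Complex.exp_ne_zero _) ^ (2 * j)
  have hu : u ^ (2 * n) = 1 := by
    rw [← pow_mul, mul_comm (2 * j), pow_mul]
    ext1
    rw [Units.val_pow_eq_pow_val, Units.val_pow_eq_pow_val, Units.val_mk0,
      Complex.exp_pi_mul_I_div_pow_two_mul, one_pow, Units.val_one]
  open GeneralLinearGroup in
  refine ⟨V8n.lift (diagonal ![u, -u⁻¹]) quarterTurn (diagonal_neg_inv_pow_eq_one hu)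
    quarterTurn_pow_four (quarterTurn_mul_diagonal_neg_inv_sq u)
    (inv_quarterTurn_mul_diagonal_neg_inv_sq u), ?_, ?_⟩
  · simp [u, diagonal_fin_two]
  · simp [quarterTurn]

open Matrix Complex in
theorem stmt_7 (n : ℕ) (hn : Odd n) (j : ℕ) (hj : j ≤ n - 1) :
    ∃ ρ : V8n n →* GL (Fin 2) ℂ,
      (ρ (va n) : Matrix (Fin 2) (Fin 2) ℂ) =
        !![Complex.exp (Real.pi * Complex.I / n) ^ (2 * j), 0;
           0, -(Complex.exp (Real.pi * Complex.I / n) ^ (2 * j))⁻¹] ∧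
      (ρ (vb n) : Matrix (Fin 2) (Fin 2) ℂ) = !![0, 1; -1, 0] :=
  stmt_7_general n j
end

section
/- Suppose α₁, α₂, α₃, α₄, β₀,…,β_{n−1}, γ₁,…,γ_{n−1} are real numbers with α₁ + α₂ + α₃ + α₄ + 4Σⱼβⱼ + 4Σₖγₖ = 0, and T is a real number such that (α₁−α₂)T, (α₁−α₃)T, (α₁−α₄)T, (α₁−βⱼ)T − 1/2 for all j, and (α₁−γₖ)T for all k are integers. If α₁ is a positive integer, then T is rational. -/
/-!
Summing the integrality conditions with the weights `1, 1, 1, 4, …, 4` of the trace identity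
cancels every eigenvalue other than `α₁`, while the `n` half-integers contribute `4 · n / 2 = 2n`.
Hence `(8n + 4) α₁ T` is an integer, and `T` is rational once `α₁` is a positive integer.
-/

open Finset

lemma exists_int_sum_eq_of_forall_exists_int {ι : Type*} [Fintype ι] {f : ι → ℝ}
    (h : ∀ i, ∃ z : ℤ, f i = z) : ∃ z : ℤ, ∑ i, f i = z := by
  choose z hz using h
  exact ⟨∑ i, z i, by push_cast; exact sum_congr rfl fun i _ => hz i⟩

lemma exists_rat_eq_of_mul_eq_int {c : ℤ} (hc : c ≠ 0) {T : ℝ} {z : ℤ} (h : c * T = z) :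
    ∃ q : ℚ, T = q :=
  ⟨z / c, by push_cast; rw [← h]; field_simp⟩

lemma sum_sub_mul_sub_half {ι : Type*} [Fintype ι] (a T : ℝ) (f : ι → ℝ) :
    ∑ i, ((a - f i) * T - 1 / 2) = (Fintype.card ι * a - ∑ i, f i) * T - Fintype.card ι / 2 := by
  simp only [sum_sub_distrib, ← sum_mul, sum_const, card_univ, nsmul_eq_mul]
  ring

lemma sum_sub_mul {ι : Type*} [Fintype ι] (a T : ℝ) (f : ι → ℝ) :
    ∑ i, (a - f i) * T = (Fintype.card ι * a - ∑ i, f i) * T := by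
  simp only [← sum_mul, sum_sub_distrib, sum_const, card_univ, nsmul_eq_mul]

lemma exists_int_eq_mul_of_trace_eq_zero (n : ℕ) (α₁ α₂ α₃ α₄ : ℝ) (β γ : Fin n → ℝ)
    (htrace : α₁ + α₂ + α₃ + α₄ + 4 * ∑ j, β j + 4 * ∑ k, γ k = 0) (T : ℝ)
    (h2 : ∃ z : ℤ, (α₁ - α₂) * T = z)
    (h3 : ∃ z : ℤ, (α₁ - α₃) * T = z)
    (h4 : ∃ z : ℤ, (α₁ - α₄) * T = z)
    (hβ : ∀ j, ∃ z : ℤ, (α₁ - β j) * T - 1 / 2 = z)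
    (hγ : ∀ k, ∃ z : ℤ, (α₁ - γ k) * T = z) :
    ∃ z : ℤ, ((8 * n + 4 : ℤ) : ℝ) * α₁ * T = z := by
  obtain ⟨z₂, h₂⟩ := h2
  obtain ⟨z₃, h₃⟩ := h3
  obtain ⟨z₄, h₄⟩ := h4
  obtain ⟨zβ, hzβ⟩ := exists_int_sum_eq_of_forall_exists_int hβ
  obtain ⟨zγ, hzγ⟩ := exists_int_sum_eq_of_forall_exists_int hγ
  rw [sum_sub_mul_sub_half, Fintype.card_fin] at hzβ
  rw [sum_sub_mul, Fintype.card_fin] at hzγ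
  refine ⟨z₂ + z₃ + z₄ + 4 * zβ + 2 * n + 4 * zγ, ?_⟩
  push_cast
  linear_combination h₂ + h₃ + h₄ + 4 * hzβ + 4 * hzγ + T * htrace

theorem stmt_13_general (n : ℕ)
    (α₁ α₂ α₃ α₄ : ℝ) (β γ : Fin n → ℝ)
    (htrace : α₁ + α₂ + α₃ + α₄ + 4 * ∑ j, β j + 4 * ∑ k, γ k = 0)
    (T : ℝ)
    (h2 : ∃ z : ℤ, (α₁ - α₂) * T = z)
    (h3 : ∃ z : ℤ, (α₁ - α₃) * T = z)
    (h4 : ∃ z : ℤ, (α₁ - α₄) * T = z)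
    (hβ : ∀ j, ∃ z : ℤ, (α₁ - β j) * T - 1 / 2 = z)
    (hγ : ∀ k, ∃ z : ℤ, (α₁ - γ k) * T = z)
    (hα₁ : ∃ m : ℕ, 0 < m ∧ α₁ = m) :
    ∃ q : ℚ, T = q := by
  obtain ⟨m, hm, rfl⟩ := hα₁
  obtain ⟨z, hz⟩ :=
    exists_int_eq_mul_of_trace_eq_zero n m α₂ α₃ α₄ β γ htrace T h2 h3 h4 hβ hγ
  have hc : (8 * n + 4 : ℤ) * m ≠ 0 := by positivity
  exact exists_rat_eq_of_mul_eq_int hc (by push_cast at hz ⊢; exact hz)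

theorem stmt_13 (n : ℕ) (hn : 0 < n)
    (α₁ α₂ α₃ α₄ : ℝ) (β γ : Fin n → ℝ)
    (htrace : α₁ + α₂ + α₃ + α₄ + 4 * ∑ j, β j + 4 * ∑ k, γ k = 0)
    (T : ℝ)
    (h2 : ∃ z : ℤ, (α₁ - α₂) * T = z)
    (h3 : ∃ z : ℤ, (α₁ - α₃) * T = z)
    (h4 : ∃ z : ℤ, (α₁ - α₄) * T = z)
    (hβ : ∀ j, ∃ z : ℤ, (α₁ - β j) * T - 1 / 2 = z)
    (hγ : ∀ k, ∃ z : ℤ, (α₁ - γ k) * T = z)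
    (hα₁ : ∃ m : ℕ, 0 < m ∧ α₁ = m) :
    ∃ q : ℚ, T = q :=
  stmt_13_general n α₁ α₂ α₃ α₄ β γ htrace T h2 h3 h4 hβ hγ hα₁
end
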